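/- Mutual information as the measure of the content intersection: for random variables X : Ω → α and Y : Ω → β, H(X) + H(Y) − H(⟨X,Y⟩) = Σ_{S ∈ C(X) ∩ C(Y)} L°(S), where ⟨X,Y⟩ : Ω → α × β is the joint variable ω ↦ (X(ω), Y(ω)). -/

import Mathlib

open Finset
open scoped Classical

/-- The total loss of a finite family of reals:
`L(p_1, …, p_n) = Σ_i p_i log(1/p_i) − (Σ_i p_i) log(1/Σ_i p_i)`. -/
noncomputable def totalLoss {ι : Type*} (s : Finset ι) (p : ι → ℝ) : ℝ :=
  ∑ i ∈ s, p i * Real.log (1 / p i) - (∑ i ∈ s, p i) * Real.log (1 / ∑ i ∈ s, p i)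

/-- The interior loss, defined by inclusion–exclusion:
`L°(p_1, …, p_n) = Σ_{S ⊆ {1,…,n}} (−1)^{n−|S|} L((p_i)_{i∈S})`. -/
noncomputable def interiorLoss {ι : Type*} [DecidableEq ι] (s : Finset ι) (p : ι → ℝ) : ℝ :=
  ∑ T ∈ s.powerset, (-1 : ℝ) ^ (s.card - T.card) * totalLoss T p

/-- The probability that the random variable `X : Ω → α` takes the value `a`,
with respect to the mass function `P`. -/
noncomputable def probOf {Ω α : Type*} [Fintype Ω] (P : Ω → ℝ) (X : Ω → α) (a : α) : ℝ :=
  ∑ ω ∈ Finset.univ.filter (fun ω => X ω = a), P ω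

/-- The Shannon entropy `H(X) = Σ_{a ∈ X(Ω)} P(X = a) log(1/P(X = a))` of a random
variable `X : Ω → α` with respect to the mass function `P`. -/
noncomputable def entropy {Ω α : Type*} [Fintype Ω] (P : Ω → ℝ) (X : Ω → α) : ℝ :=
  ∑ a ∈ Finset.univ.image X, probOf P X a * Real.log (1 / probOf P X a)

/-- The content `C(X)` of a random variable `X : Ω → α`: the collection of subsets
`S ⊆ Ω` with `|S| ≥ 2` on which `X` is not constant. -/
noncomputable def content {Ω α : Type*} [Fintype Ω] (X : Ω → α) : Finset (Finset Ω) :=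
  Finset.univ.filter (fun S => 2 ≤ S.card ∧ ∃ ω ∈ S, ∃ ω2 ∈ S, X ω ≠ X ω2)

/-! Möbius inversion on the subset lattice turns the definition of `L°` into
`Σ_{S ⊆ T} L°(S) = L(T)`. For `T = Ω` and `Σ P = 1` this is `Σ_ω P ω log(1/P ω)`. The sets
outside `C(X)` are `∅` and the nonempty subsets of the fibres of `X`, so together they contribute
`Σ_a L(X⁻¹ a) = Σ_ω P ω log(1/P ω) - H(X)`; hence `H(X) = Σ_{S ∈ C(X)} L°(S)`. Since
`C(⟨X,Y⟩) = C(X) ∪ C(Y)`, the theorem is inclusion–exclusion for this sum. -/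

namespace Finset

variable {ι R : Type*} [DecidableEq ι] [Ring R]

lemma sum_powerset_insert_neg_one_pow_mul {a : ι} {S : Finset ι} (ha : a ∉ S)
    (f : Finset ι → R) :
    ∑ U ∈ (insert a S).powerset, (-1 : R) ^ (#(insert a S) - #U) * f U =
      -∑ U ∈ S.powerset, (-1 : R) ^ (#S - #U) * f U +
        ∑ U ∈ S.powerset, (-1 : R) ^ (#S - #U) * f (insert a U) := by
  rw [sum_powerset_insert ha, card_insert_of_notMem ha, ← sum_neg_distrib]
  congr 1 <;> refine sum_congr rfl fun U hU => ?_
  · rw [Nat.sub_add_comm (card_le_card (mem_powerset.1 hU)), pow_succ, mul_neg_one, neg_mul]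
  · rw [card_insert_of_notMem fun h => ha (mem_powerset.1 hU h), Nat.add_sub_add_right]

/-- Möbius inversion on the lattice of finite subsets. -/
lemma sum_powerset_sum_powerset_neg_one_pow_mul (f : Finset ι → R) (T : Finset ι) :
    ∑ S ∈ T.powerset, ∑ U ∈ S.powerset, (-1 : R) ^ (#S - #U) * f U = f T := by
  induction T using Finset.induction_on generalizing f with
  | empty => simp
  | insert a T ha ih =>
    rw [sum_powerset_insert ha, sum_congr rfl fun S hS =>
      sum_powerset_insert_neg_one_pow_mul (fun h => ha (mem_powerset.1 hS h)) f,
      sum_add_distrib, sum_neg_distrib, add_neg_cancel_left, ih]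

end Finset

lemma interiorLoss_empty {ι : Type*} [DecidableEq ι] (p : ι → ℝ) :
    interiorLoss (∅ : Finset ι) p = 0 := by
  simp [interiorLoss, totalLoss]

lemma sum_powerset_interiorLoss {ι : Type*} [DecidableEq ι] (T : Finset ι) (p : ι → ℝ) :
    ∑ S ∈ T.powerset, interiorLoss S p = totalLoss T p :=
  sum_powerset_sum_powerset_neg_one_pow_mul (totalLoss · p) T

lemma totalLoss_of_sum_eq_one {ι : Type*} {s : Finset ι} {p : ι → ℝ} (h : ∑ i ∈ s, p i = 1) :
    totalLoss s p = ∑ i ∈ s, p i * Real.log (1 / p i) := by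
  simp [totalLoss, h]

section
variable {Ω α β : Type*} [Fintype Ω]

lemma sum_totalLoss_fiber (P : Ω → ℝ) (X : Ω → α) :
    ∑ a ∈ univ.image X, totalLoss (univ.filter fun ω => X ω = a) P =
      ∑ ω, P ω * Real.log (1 / P ω) - entropy P X := by
  rw [entropy, ← sum_fiberwise_of_maps_to (g := X) fun ω _ => mem_image_of_mem X (mem_univ ω),
    ← sum_sub_distrib]
  rfl

lemma mem_content_iff {X : Ω → α} {S : Finset Ω} :
    S ∈ content X ↔ ∃ ω ∈ S, ∃ ω' ∈ S, X ω ≠ X ω' := by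
  simp only [content, mem_filter, mem_univ, true_and, and_iff_right_iff_imp]
  rintro ⟨ω, hω, ω', hω', hne⟩
  exact one_lt_card.2 ⟨ω, hω, ω', hω', fun h => hne (congrArg X h)⟩

lemma content_prodMk (X : Ω → α) (Y : Ω → β) :
    content (fun ω => (X ω, Y ω)) = content X ∪ content Y := by
  ext S
  simp only [mem_union, mem_content_iff, ne_eq, Prod.mk.injEq, not_and_or]
  aesop

lemma biUnion_powerset_fiber_erase_empty (X : Ω → α) :
    (univ.image X).biUnion (fun a => (univ.filter fun ω => X ω = a).powerset.erase ∅) =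
      (content X)ᶜ.erase ∅ := by
  ext S
  simp only [mem_biUnion, mem_image, mem_univ, true_and, mem_erase, mem_powerset, mem_compl,
    mem_content_iff, subset_iff, mem_filter, ne_eq, not_exists, not_and, not_not]
  constructor
  · rintro ⟨a, -, hS, hX⟩
    exact ⟨hS, fun ω hω ω' hω' => (hX hω).trans (hX hω').symm⟩
  · rintro ⟨hS, hX⟩
    obtain ⟨ω, hω⟩ := nonempty_iff_ne_empty.2 hS
    exact ⟨X ω, ⟨ω, rfl⟩, hS, fun ω' hω' => hX ω' hω' ω hω⟩

lemma sum_interiorLoss_compl_content (P : Ω → ℝ) (X : Ω → α) :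
    ∑ S ∈ (content X)ᶜ, interiorLoss S P =
      ∑ a ∈ univ.image X, totalLoss (univ.filter fun ω => X ω = a) P := by
  have hdisj : (univ.image X : Set α).PairwiseDisjoint
      fun a => (univ.filter fun ω => X ω = a).powerset.erase ∅ := by
    intro a _ b _ hab
    refine disjoint_left.2 fun S hSa hSb => ?_
    simp only [mem_erase, mem_powerset, ← nonempty_iff_ne_empty] at hSa hSb
    obtain ⟨ω, hω⟩ := hSa.1
    exact hab ((mem_filter.1 (hSa.2 hω)).2.symm.trans (mem_filter.1 (hSb.2 hω)).2)
  rw [← sum_erase _ (f := (interiorLoss · P)) (interiorLoss_empty P),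
    ← biUnion_powerset_fiber_erase_empty, sum_biUnion hdisj]
  refine sum_congr rfl fun a _ => ?_
  rw [sum_erase _ (f := (interiorLoss · P)) (interiorLoss_empty P), sum_powerset_interiorLoss]

lemma entropy_eq_sum_content (P : Ω → ℝ) (hsum : ∑ ω, P ω = 1) (X : Ω → α) :
    entropy P X = ∑ S ∈ content X, interiorLoss S P := by
  have hall : ∑ S, interiorLoss S P = ∑ ω, P ω * Real.log (1 / P ω) := by
    rw [← powerset_univ, sum_powerset_interiorLoss, totalLoss_of_sum_eq_one hsum]
  rw [← sum_add_sum_compl (content X), sum_interiorLoss_compl_content, sum_totalLoss_fiber] at hall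
  linarith

end

theorem mutualInformation_eq_sum_content_inter_general {Ω α β : Type*} [Fintype Ω]
    (P : Ω → ℝ) (hsum : ∑ ω, P ω = 1)
    (X : Ω → α) (Y : Ω → β) :
    entropy P X + entropy P Y - entropy P (fun ω => (X ω, Y ω)) =
      ∑ S ∈ content X ∩ content Y, interiorLoss S P := by
  rw [entropy_eq_sum_content P hsum X, entropy_eq_sum_content P hsum Y,
    entropy_eq_sum_content P hsum, content_prodMk, ← sum_union_inter]
  ring

/-- mutual information as the measure of the content intersection.
For `X : Ω → α` and `Y : Ω → β`,
`H(X) + H(Y) − H(⟨X,Y⟩) = Σ_{S ∈ C(X) ∩ C(Y)} L°(S)`. -/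
theorem mutualInformation_eq_sum_content_inter {Ω α β : Type*} [Fintype Ω] [Nonempty Ω]
    [Fintype α] [Fintype β] (P : Ω → ℝ) (hP : ∀ ω, 0 < P ω) (hsum : ∑ ω, P ω = 1)
    (X : Ω → α) (Y : Ω → β) :
    entropy P X + entropy P Y - entropy P (fun ω => (X ω, Y ω)) =
      ∑ S ∈ content X ∩ content Y, interiorLoss S P :=
  mutualInformation_eq_sum_content_inter_general P hsum X Y
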